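/- arXiv:2508.09480 — 7 statements merged into one kernel-verified Lean document; each statement's English description precedes it below -/
import Mathlib

section
/- The series ∑_{k=2}^∞ (log k)(2k-1)/(k(k-1))^2 is at most 0.87. -/
/-! Since `(2k - 1) / (k (k - 1))² = 1 / (k - 1)² - 1 / k²`, the terms look like a telescoping
series with an extra factor `log k`. Using `log (x + 1) ≤ log x + 1 / x` one checks that the term
at `x` is at most `G x - G (x + 1)` for `G x = (2 log x + 1) / (2 (x - 1)²)`, so the tail from
`k = 6` on is at most `G 6`. What remains is a finite sum involving only `log 2`, `log 3`,
`log 5`, for which nine-digit upper bounds suffice. -/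

open Finset Real

theorem sum_range_add_le_of_le_sub_succ {a g : ℕ → ℝ} {N : ℕ}
    (hag : ∀ n ≥ N, a n ≤ g n - g (n + 1)) {M : ℕ} (hNM : N ≤ M) :
    ∑ i ∈ range M, a i + g M ≤ ∑ i ∈ range N, a i + g N := by
  induction M, hNM using Nat.le_induction with
  | base => rfl
  | succ M hNM ih =>
    rw [sum_range_succ]
    linarith [hag M hNM]

theorem summable_and_tsum_le_of_le_sub_succ {a g : ℕ → ℝ} (N : ℕ) (ha : ∀ n, 0 ≤ a n)
    (hg : ∀ n ≥ N, 0 ≤ g n) (hag : ∀ n ≥ N, a n ≤ g n - g (n + 1)) :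
    Summable a ∧ ∑' n, a n ≤ ∑ i ∈ range N, a i + g N := by
  have hpartial : ∀ M, ∑ i ∈ range M, a i ≤ ∑ i ∈ range N, a i + g N := fun M => calc
    ∑ i ∈ range M, a i ≤ ∑ i ∈ range (max M N), a i :=
      sum_le_sum_of_subset_of_nonneg (range_subset_range.mpr (le_max_left M N))
        fun i _ _ => ha i
    _ ≤ ∑ i ∈ range (max M N), a i + g (max M N) :=
      le_add_of_nonneg_right (hg _ (le_max_right M N))
    _ ≤ ∑ i ∈ range N, a i + g N := sum_range_add_le_of_le_sub_succ hag (le_max_right M N)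
  exact ⟨summable_of_sum_range_le ha hpartial, tsum_le_of_sum_range_le ha hpartial⟩

theorem log_add_one_le_log_add_inv {x : ℝ} (hx : 0 < x) : log (x + 1) ≤ log x + x⁻¹ := by
  have h := log_le_sub_one_of_pos (div_pos (by linarith : 0 < x + 1) hx)
  rw [log_div (by positivity) hx.ne', add_div, div_self hx.ne', one_div] at h
  linarith

noncomputable def logSeriesTerm (x : ℝ) : ℝ := log x * (2 * x - 1) / (x * (x - 1)) ^ 2

noncomputable def logSeriesMajorant (x : ℝ) : ℝ := (2 * log x + 1) / (2 * (x - 1) ^ 2)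

theorem logSeriesTerm_nonneg {x : ℝ} (hx : 1 ≤ x) : 0 ≤ logSeriesTerm x :=
  div_nonneg (mul_nonneg (log_nonneg hx) (by linarith)) (sq_nonneg _)

theorem logSeriesMajorant_nonneg {x : ℝ} (hx : 1 ≤ x) : 0 ≤ logSeriesMajorant x :=
  div_nonneg (by linarith [log_nonneg hx]) (by positivity)

theorem logSeriesTerm_le_majorant_sub {x : ℝ} (hx : 1 < x) :
    logSeriesTerm x ≤ logSeriesMajorant x - logSeriesMajorant (x + 1) := by
  have hx0 : 0 < x := by linarith
  have hx1 : 0 < x - 1 := by linarith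
  have hlog := log_add_one_le_log_add_inv hx0
  calc logSeriesTerm x
      ≤ logSeriesTerm x + (3 * x - 2) / (2 * x ^ 3 * (x - 1) ^ 2) :=
        le_add_of_nonneg_right (div_nonneg (by linarith) (by positivity))
    _ = logSeriesMajorant x - (2 * (log x + x⁻¹) + 1) / (2 * x ^ 2) := by
        unfold logSeriesTerm logSeriesMajorant
        field_simp
        ring
    _ ≤ logSeriesMajorant x - logSeriesMajorant (x + 1) := by
        unfold logSeriesMajorant
        rw [add_sub_cancel_right]
        gcongr

theorem sum_logSeriesTerm_add_majorant_le :
    ∑ i ∈ range 4, logSeriesTerm ((i : ℝ) + 2) + logSeriesMajorant ((4 : ℕ) + 2) ≤ 0.87 := by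
  have h4 : log 4 = 2 * log 2 := by
    rw [show (4 : ℝ) = 2 ^ 2 by norm_num, log_pow, Nat.cast_ofNat]
  have h6 : log 6 = log 2 + log 3 := by
    rw [show (6 : ℝ) = 2 * 3 by norm_num, log_mul two_ne_zero three_ne_zero]
  simp only [sum_range_succ, sum_range_zero, logSeriesTerm, logSeriesMajorant]
  norm_num [h4, h6]
  linarith [log_two_lt_d9, log_three_lt_d9, log_five_lt_d9]

/-- ∑_{k=2}^∞ (log k)(2k-1)/(k(k-1))^2 ≤ 0.87. -/
theorem sum_log_bound :
    Summable (fun k : ℕ => (Real.log ((k : ℝ) + 2) * (2 * ((k : ℝ) + 2) - 1)) /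
      ((((k : ℝ) + 2) * (((k : ℝ) + 2) - 1)) ^ 2)) ∧
    (∑' k : ℕ, (Real.log ((k : ℝ) + 2) * (2 * ((k : ℝ) + 2) - 1)) /
      ((((k : ℝ) + 2) * (((k : ℝ) + 2) - 1)) ^ 2)) ≤ 0.87 := by
  have hx : ∀ n : ℕ, (1 : ℝ) < n + 2 := fun n => by linarith [n.cast_nonneg (α := ℝ)]
  obtain ⟨hsum, htsum⟩ := summable_and_tsum_le_of_le_sub_succ
    (a := fun n => logSeriesTerm ((n : ℝ) + 2)) (g := fun n => logSeriesMajorant ((n : ℝ) + 2)) 4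
    (fun n => logSeriesTerm_nonneg (hx n).le) (fun n _ => logSeriesMajorant_nonneg (hx n).le)
    fun n _ => by
      simpa only [Nat.cast_succ, add_right_comm] using logSeriesTerm_le_majorant_sub (hx n)
  exact ⟨hsum, htsum.trans sum_logSeriesTerm_add_majorant_le⟩
end

section
/- The series ∑_{k=2}^∞ k(log k)(2k-1)/(k(k-1))^2 is at most 3.06. -/
lemma log_le_sq (x : ℝ) (hx : 1 ≤ x) : Real.log x ≤ (x^2 - 1)/(2*x) := by
  have hx0 : (0:ℝ) < x := lt_of_lt_of_le one_pos hx
  have hy : 0 ≤ (x^2 - 1)/(2*x) := div_nonneg (by nlinarith) (by linarith)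
  have hq := Real.quadratic_le_exp_of_nonneg hy
  have hyx : (x^2 - 1)/(2*x) * (2*x) = x^2 - 1 := div_mul_cancel₀ _ (by positivity)
  have hxe : x ≤ Real.exp ((x^2 - 1)/(2*x)) := by
    nlinarith [sq_nonneg (x^2 - 2*x + 1), sq_nonneg ((x^2-1)/(2*x)), mul_pos hx0 hx0]
  calc Real.log x ≤ Real.log (Real.exp ((x^2 - 1)/(2*x))) := Real.log_le_log hx0 hxe
    _ = (x^2 - 1)/(2*x) := Real.log_exp _

lemma log_ub (x : ℝ) (k : ℕ) (hx : 1 ≤ x) (h1 : (2:ℝ)^k ≤ x^32) :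
    Real.log x ≤ ((k:ℝ) * 0.6931471808 + ((x^32/2^k)^2 - 1)/(2*(x^32/2^k)))/32 := by
  have h2p : (0:ℝ) < 2^k := by positivity
  have hR1 : 1 ≤ x^32/2^k := (one_le_div h2p).2 h1
  have hs := log_le_sq _ hR1
  have hlogR : Real.log (x^32/2^k) = 32 * Real.log x - k * Real.log 2 := by
    rw [Real.log_div (by positivity) (by positivity), Real.log_pow, Real.log_pow]
    push_cast; ring
  have hl2 : Real.log 2 < 0.6931471808 := Real.log_two_lt_d9
  have hk : (0:ℝ) ≤ (k:ℝ) := Nat.cast_nonneg k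
  nlinarith [mul_le_mul_of_nonneg_left hl2.le hk]

lemma log_lb (x : ℝ) (k : ℕ) (hx : 1 ≤ x) (h1 : x^32 ≤ (2:ℝ)^k) :
    ((k:ℝ) * 0.6931471803 - ((2^k/x^32)^2 - 1)/(2*((2:ℝ)^k/x^32)))/32 ≤ Real.log x := by
  have hxp : (0:ℝ) < x^32 := by positivity
  have hR1 : 1 ≤ (2:ℝ)^k/x^32 := (one_le_div hxp).2 h1
  have hs := log_le_sq _ hR1
  have hlogR : Real.log ((2:ℝ)^k/x^32) = k * Real.log 2 - 32 * Real.log x := by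
    rw [Real.log_div (by positivity) (by positivity), Real.log_pow, Real.log_pow]
    push_cast; ring
  have hl2 : (0.6931471803:ℝ) < Real.log 2 := Real.log_two_gt_d9
  have hk : (0:ℝ) ≤ (k:ℝ) := Nat.cast_nonneg k
  nlinarith [mul_le_mul_of_nonneg_left hl2.le hk]

noncomputable def bb (t : ℝ) : ℝ :=
  (2*Real.log t + 2)/(t-1) - (5/4*Real.log t + 1)/(t-1)^2

noncomputable def ff : ℕ → ℝ := fun k : ℕ => (((k : ℝ) + 2) * Real.log ((k : ℝ) + 2) * (2 * ((k : ℝ) + 2) - 1)) /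
      ((((k : ℝ) + 2) * (((k : ℝ) + 2) - 1)) ^ 2)

lemma step (x : ℝ) (hx : 31 ≤ x) :
    (x+1) * Real.log (x+1) * (2*(x+1) - 1) / (((x+1) * ((x+1) - 1))^2)
      ≤ bb x - bb (x+1) := by
  have hx0 : (0:ℝ) < x := by linarith
  have hx1 : (0:ℝ) < x - 1 := by linarith
  have hx2 : (0:ℝ) < x + 1 := by linarith
  set L := Real.log x with hL
  set M := Real.log (x+1) with hM
  have hL0 : 0 ≤ L := Real.log_nonneg (by linarith)
  have hML : M - L ≤ (2*x+1)/(2*x*(x+1)) := by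
    have h1 : M - L = Real.log ((x+1)/x) := (Real.log_div (by linarith) (by linarith)).symm
    have h2 := log_le_sq ((x+1)/x) (by rw [le_div_iff₀ hx0]; linarith)
    rw [h1]
    refine h2.trans_eq ?_
    field_simp
    ring
  have hT1 : 0 ≤ ((2*x+1)/(2*x*(x+1)) - (M - L)) * ((8*x^2+11*x-1)/(4*x^2*(x+1))) := by
    apply mul_nonneg (by linarith)
    apply div_nonneg (by nlinarith) (by positivity)
  have hT2 : 0 ≤ L * ((2*x^2-13*x+1)/(4*x^2*(x-1)^2*(x+1))) := by
    apply mul_nonneg hL0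
    apply div_nonneg (by nlinarith) (by positivity)
  have hT3 : 0 ≤ (2*x^4-5*x^3-27*x^2-3*x+1)/(8*x^3*(x+1)^2*(x-1)^2) := by
    apply div_nonneg (by nlinarith) (by positivity)
  have hiden : bb x - bb (x+1) - (x+1) * M * (2*(x+1) - 1) / (((x+1) * ((x+1) - 1))^2)
      = ((2*x+1)/(2*x*(x+1)) - (M - L)) * ((8*x^2+11*x-1)/(4*x^2*(x+1)))
        + L * ((2*x^2-13*x+1)/(4*x^2*(x-1)^2*(x+1)))
        + (2*x^4-5*x^3-27*x^2-3*x+1)/(8*x^3*(x+1)^2*(x-1)^2) := by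
    unfold bb
    rw [show x + 1 - 1 = x by ring]
    rw [← hL, ← hM]
    field_simp
    ring
  linarith

lemma ff_nonneg (k : ℕ) : 0 ≤ ff k := by
  unfold ff
  have h2 : (1:ℝ) ≤ (k:ℝ) + 2 := by
    have hk : (0:ℝ) ≤ (k:ℝ) := Nat.cast_nonneg k
    linarith
  apply div_nonneg _ (by positivity)
  have hk : (0:ℝ) ≤ (k:ℝ) := Nat.cast_nonneg k
  apply mul_nonneg (mul_nonneg (by linarith) (Real.log_nonneg h2))
  linarith

lemma bb_nonneg (t : ℝ) (ht : 41 ≤ t) : 0 ≤ bb t := by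
  unfold bb
  have h1 : (0:ℝ) < t - 1 := by linarith
  have hL : 0 ≤ Real.log t := Real.log_nonneg (by linarith)
  rw [sub_nonneg, div_le_div_iff₀ (by positivity) h1]
  nlinarith [mul_nonneg hL (show (0:ℝ) ≤ t - 1 by linarith),
    mul_nonneg hL (show (0:ℝ) ≤ 2*t - 4 by linarith),
    mul_nonneg (mul_nonneg hL (show (0:ℝ) ≤ t - 1 by linarith)) (show (0:ℝ) ≤ t - 1 by linarith)]

lemma tele : ∀ K : ℕ, ∑ k ∈ Finset.range K, ff (40+k) ≤ bb 41 - bb ((K:ℝ)+41)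
  | 0 => by norm_num
  | (K+1) => by
      rw [Finset.sum_range_succ]
      have h1 := tele K
      have hc : ((40+K:ℕ):ℝ) = (K:ℝ) + 40 := by push_cast; ring
      have hK0 : (0:ℝ) ≤ (K:ℝ) := Nat.cast_nonneg K
      have h2 := step ((K:ℝ)+41) (by linarith)
      have h3 : ff (40+K) = ((K:ℝ)+41+1) * Real.log ((K:ℝ)+41+1) * (2*((K:ℝ)+41+1) - 1) /
          ((((K:ℝ)+41+1) * (((K:ℝ)+41+1) - 1))^2) := by
        unfold ff
        rw [hc, show (K:ℝ)+40+2 = (K:ℝ)+41+1 from by ring]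
      have h4 : (((K+1:ℕ)):ℝ) + 41 = (K:ℝ)+41+1 := by push_cast; ring
      rw [h3, h4]
      linarith

lemma sum40 : ∑ k ∈ Finset.range 40, ff k ≤ 2.8274638 := by
  have h2 : Real.log 2 ≤ 0.6931471808 := (log_ub 2 32 (by norm_num) (by norm_num)).trans (by norm_num)
  have h3 : Real.log 3 ≤ 1.0992645002 := (log_ub 3 50 (by norm_num) (by norm_num)).trans (by norm_num)
  have h4 : Real.log 4 ≤ 1.3862943616 := (log_ub 4 64 (by norm_num) (by norm_num)).trans (by norm_num)
  have h5 : Real.log 5 ≤ 1.6094856491 := (log_ub 5 74 (by norm_num) (by norm_num)).trans (by norm_num)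
  have h6 : Real.log 6 ≤ 1.7924116810 := (log_ub 6 82 (by norm_num) (by norm_num)).trans (by norm_num)
  have h7 : Real.log 7 ≤ 1.9469383310 := (log_ub 7 89 (by norm_num) (by norm_num)).trans (by norm_num)
  have h8 : Real.log 8 ≤ 2.0794415424 := (log_ub 8 96 (by norm_num) (by norm_num)).trans (by norm_num)
  have h9 : Real.log 9 ≤ 2.1973705956 := (log_ub 9 101 (by norm_num) (by norm_num)).trans (by norm_num)
  have h10 : Real.log 10 ≤ 2.3026328299 := (log_ub 10 106 (by norm_num) (by norm_num)).trans (by norm_num)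
  have h11 : Real.log 11 ≤ 2.3985019741 := (log_ub 11 110 (by norm_num) (by norm_num)).trans (by norm_num)
  have h12 : Real.log 12 ≤ 2.4855588618 := (log_ub 12 114 (by norm_num) (by norm_num)).trans (by norm_num)
  have h13 : Real.log 13 ≤ 2.5650730067 := (log_ub 13 118 (by norm_num) (by norm_num)).trans (by norm_num)
  have h14 : Real.log 14 ≤ 2.6400855118 := (log_ub 14 121 (by norm_num) (by norm_num)).trans (by norm_num)
  have h15 : Real.log 15 ≤ 2.7080502170 := (log_ub 15 125 (by norm_num) (by norm_num)).trans (by norm_num)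
  have h16 : Real.log 16 ≤ 2.7725887232 := (log_ub 16 128 (by norm_num) (by norm_num)).trans (by norm_num)
  have h17 : Real.log 17 ≤ 2.8341111085 := (log_ub 17 130 (by norm_num) (by norm_num)).trans (by norm_num)
  have h18 : Real.log 18 ≤ 2.8905177764 := (log_ub 18 133 (by norm_num) (by norm_num)).trans (by norm_num)
  have h19 : Real.log 19 ≤ 2.9458806319 := (log_ub 19 135 (by norm_num) (by norm_num)).trans (by norm_num)
  have h20 : Real.log 20 ≤ 2.9957800107 := (log_ub 20 138 (by norm_num) (by norm_num)).trans (by norm_num)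
  have h21 : Real.log 21 ≤ 3.0448197958 := (log_ub 21 140 (by norm_num) (by norm_num)).trans (by norm_num)
  have h22 : Real.log 22 ≤ 3.0916491549 := (log_ub 22 142 (by norm_num) (by norm_num)).trans (by norm_num)
  have h23 : Real.log 23 ≤ 3.1362478991 := (log_ub 23 144 (by norm_num) (by norm_num)).trans (by norm_num)
  have h24 : Real.log 24 ≤ 3.1787060426 := (log_ub 24 146 (by norm_num) (by norm_num)).trans (by norm_num)
  have h25 : Real.log 25 ≤ 3.2192602271 := (log_ub 25 148 (by norm_num) (by norm_num)).trans (by norm_num)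
  have h26 : Real.log 26 ≤ 3.2582201875 := (log_ub 26 150 (by norm_num) (by norm_num)).trans (by norm_num)
  have h27 : Real.log 27 ≤ 3.2958435068 := (log_ub 27 152 (by norm_num) (by norm_num)).trans (by norm_num)
  have h28 : Real.log 28 ≤ 3.3332326926 := (log_ub 28 153 (by norm_num) (by norm_num)).trans (by norm_num)
  have h29 : Real.log 29 ≤ 3.3674604556 := (log_ub 29 155 (by norm_num) (by norm_num)).trans (by norm_num)
  have h30 : Real.log 30 ≤ 3.4011973978 := (log_ub 30 157 (by norm_num) (by norm_num)).trans (by norm_num)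
  have h31 : Real.log 31 ≤ 3.4342535628 := (log_ub 31 158 (by norm_num) (by norm_num)).trans (by norm_num)
  have h32 : Real.log 32 ≤ 3.4657359040 := (log_ub 32 160 (by norm_num) (by norm_num)).trans (by norm_num)
  have h33 : Real.log 33 ≤ 3.4966371807 := (log_ub 33 161 (by norm_num) (by norm_num)).trans (by norm_num)
  have h34 : Real.log 34 ≤ 3.5272582893 := (log_ub 34 162 (by norm_num) (by norm_num)).trans (by norm_num)
  have h35 : Real.log 35 ≤ 3.5553525303 := (log_ub 35 164 (by norm_num) (by norm_num)).trans (by norm_num)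
  have h36 : Real.log 36 ≤ 3.5836649572 := (log_ub 36 165 (by norm_num) (by norm_num)).trans (by norm_num)
  have h37 : Real.log 37 ≤ 3.6115264352 := (log_ub 37 166 (by norm_num) (by norm_num)).trans (by norm_num)
  have h38 : Real.log 38 ≤ 3.6390278127 := (log_ub 38 167 (by norm_num) (by norm_num)).trans (by norm_num)
  have h39 : Real.log 39 ≤ 3.6635657180 := (log_ub 39 169 (by norm_num) (by norm_num)).trans (by norm_num)
  have h40 : Real.log 40 ≤ 3.6889271915 := (log_ub 40 170 (by norm_num) (by norm_num)).trans (by norm_num)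
  have h41 : Real.log 41 ≤ 3.7137222046 := (log_ub 41 171 (by norm_num) (by norm_num)).trans (by norm_num)
  unfold ff
  simp only [Finset.sum_range_succ, Finset.sum_range_zero]
  norm_num
  linarith [h2, h3, h4, h5, h6, h7, h8, h9, h10, h11, h12, h13, h14, h15, h16, h17, h18, h19, h20, h21, h22, h23, h24, h25, h26, h27, h28, h29, h30, h31, h32, h33, h34, h35, h36, h37, h38, h39, h40, h41]

lemma bb41 : bb 41 ≤ 0.2321602 := by
  have hu : Real.log 41 ≤ 3.7137222046 := (log_ub 41 171 (by norm_num) (by norm_num)).trans (by norm_num)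
  have hl : (3.7132678973:ℝ) ≤ Real.log 41 := le_trans (by norm_num) (log_lb 41 172 (by norm_num) (by norm_num))
  unfold bb
  norm_num
  linarith [hu, hl]

lemma main_bound : ∀ K : ℕ, ∑ k ∈ Finset.range K, ff k ≤ 3.06 := by
  intro K
  have h0 : ∑ k ∈ Finset.range K, ff k ≤ ∑ k ∈ Finset.range (40+K), ff k :=
    Finset.sum_le_sum_of_subset_of_nonneg (Finset.range_subset_range.2 (by omega))
      (fun i _ _ => ff_nonneg i)
  rw [Finset.sum_range_add] at h0
  have h1 := tele K
  have hK0 : (0:ℝ) ≤ (K:ℝ) := Nat.cast_nonneg K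
  have h2 := bb_nonneg ((K:ℝ)+41) (by linarith)
  have h3 := sum40
  have h4 := bb41
  norm_num at *
  linarith

/-- ∑_{k=2}^∞ k(log k)(2k-1)/(k(k-1))^2 ≤ 3.06. -/
theorem sum_k_log_bound :
    Summable (fun k : ℕ => (((k : ℝ) + 2) * Real.log ((k : ℝ) + 2) * (2 * ((k : ℝ) + 2) - 1)) /
      ((((k : ℝ) + 2) * (((k : ℝ) + 2) - 1)) ^ 2)) ∧
    (∑' k : ℕ, (((k : ℝ) + 2) * Real.log ((k : ℝ) + 2) * (2 * ((k : ℝ) + 2) - 1)) /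
      ((((k : ℝ) + 2) * (((k : ℝ) + 2) - 1)) ^ 2)) ≤ 3.06 := by
  have hs : Summable ff := summable_of_sum_range_le ff_nonneg main_bound
  exact ⟨hs, Summable.tsum_le_of_sum_range_le hs main_bound⟩
end

section
/- For every real T ≥ 4 and every integer N with 3 ≤ N ≤ ⌈T-1⌉, the partial sum ∑_{k=3}^{N} (log k)/(k-1) is at most (log T)^2/2 + 0.683. -/
/-!
Let `D N = ∑_{k=3}^N log k / (k - 1) - (log N)² / 2`. Its increments are about `log N / (2N²)`,
whose tail sums are about `(log N + 1) / (2N)`. The explicit majorant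
`logTail N = (log (N + 1) + 2) / (2 (N - 1))` of these tails makes `D N + logTail N` decreasing,
using only `2 / (2x + 1) ≤ log (x + 1) - log x ≤ 1 / x`. Hence `D N ≤ D 4 + logTail 4 < 0.683`
for `N ≥ 4`, while `D 3 < 0`; finally `N < T` gives `log N ≤ log T`.
-/

open Real Finset

lemma log_add_one_sub_log_le {x : ℝ} (hx : 0 < x) : log (x + 1) - log x ≤ x⁻¹ := by
  rw [← log_div (by positivity) hx.ne', add_div, div_self hx.ne', one_div]
  linarith [log_le_sub_one_of_pos (show 0 < 1 + x⁻¹ by positivity)]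

lemma two_div_le_log_add_one_sub_log {x : ℝ} (hx : 0 < x) :
    2 / (2 * x + 1) ≤ log (x + 1) - log x := by
  rw [← log_div (by positivity) hx.ne', add_div, div_self hx.ne', one_div]
  convert le_log_one_add_of_nonneg (inv_nonneg.mpr hx.le) using 1
  field_simp
  ring

noncomputable def logTail (x : ℝ) : ℝ := (log (x + 1) + 2) / (2 * (x - 1))

lemma logTail_nonneg {x : ℝ} (hx : 1 ≤ x) : 0 ≤ logTail x :=
  div_nonneg (by linarith [log_nonneg (show 1 ≤ x + 1 by linarith)]) (by linarith)

lemma log_div_add_logTail_le {y : ℝ} (hy : 1 < y) :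
    log (y + 1) / y + logTail (y + 1) ≤ (log (y + 1) ^ 2 - log y ^ 2) / 2 + logTail y := by
  have hy0 : 0 < y := by linarith
  set a := log (y + 1)
  set u := a - log y
  set t := y⁻¹ with ht
  have hty : t * y = 1 := inv_mul_cancel₀ hy0.ne'
  have ht0 : 0 < t := inv_pos.mpr hy0
  have hu_le : u ≤ t := log_add_one_sub_log_le hy0
  have hu_ge : t - t ^ 2 / 2 ≤ u := by
    refine le_trans ?_ (two_div_le_log_add_one_sub_log hy0)
    rw [le_div_iff₀ (by positivity)]
    nlinarith
  have hu0 : 0 ≤ u := by nlinarith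
  have hc : log (y + 1 + 1) ≤ a + t := by
    have := log_add_one_sub_log_le (show 0 < y + 1 by linarith)
    have := inv_anti₀ hy0 (show y ≤ y + 1 by linarith)
    linarith
  have ha : 0 ≤ a := log_nonneg (by linarith)
  have hsq : (a ^ 2 - log y ^ 2) / 2 = a * u - u ^ 2 / 2 := by ring
  have hgrowth : (t + t ^ 2) / 2 ≤ 1 / (2 * (y - 1)) := by
    rw [le_div_iff₀ (by linarith)]
    nlinarith
  calc a / y + logTail (y + 1)
      = a * t + (log (y + 1 + 1) + 2) * t / 2 := by
        unfold logTail
        rw [add_sub_cancel_right, ht]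
        field_simp
    _ ≤ (a * u - u ^ 2 / 2) + (a + 2) * ((t + t ^ 2) / 2) := by nlinarith
    _ ≤ (a * u - u ^ 2 / 2) + (a + 2) * (1 / (2 * (y - 1))) := by gcongr
    _ = (log (y + 1) ^ 2 - log y ^ 2) / 2 + logTail y := by
        rw [hsq, mul_one_div]
        rfl

noncomputable def logSumDefect (N : ℕ) : ℝ :=
  ∑ k ∈ Icc 3 N, log (k : ℝ) / ((k : ℝ) - 1) - log (N : ℝ) ^ 2 / 2

lemma logSumDefect_succ {N : ℕ} (hN : 2 ≤ N) :
    logSumDefect (N + 1) =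
      logSumDefect N + log (N + 1) / N - (log (N + 1) ^ 2 - log N ^ 2) / 2 := by
  unfold logSumDefect
  rw [sum_Icc_succ_top (by omega)]
  push_cast
  rw [add_sub_cancel_right]
  ring

lemma antitoneOn_logSumDefect_add_logTail :
    AntitoneOn (fun N : ℕ ↦ logSumDefect N + logTail N) (Set.Ici 2) := by
  refine antitoneOn_nat_Ici_of_succ_le fun N hN ↦ ?_
  have hstep := log_div_add_logTail_le (y := N) (by exact_mod_cast hN)
  simp only [logSumDefect_succ hN, Nat.cast_add, Nat.cast_one]
  linarith

lemma logSumDefect_four_add_logTail_le : logSumDefect 4 + logTail 4 ≤ 0.683 := by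
  have hsum : logSumDefect 4 + logTail 4 =
      log 3 / 2 + log 4 / 3 - log 4 ^ 2 / 2 + (log 5 + 2) / 6 := by
    unfold logSumDefect logTail
    rw [show Icc 3 4 = {3, 4} from rfl, sum_pair (by norm_num)]
    norm_num
  have hlog_le : ∀ x : ℝ, 0 < x → log x ≤ log 4 + x / 4 - 1 := fun x hx ↦ by
    have := log_le_sub_one_of_pos (div_pos hx four_pos)
    rw [log_div hx.ne' four_ne_zero] at this
    linarith
  have hlog3 := hlog_le 3 three_pos
  have hlog5 := hlog_le 5 (by norm_num)
  have hlog4 : log 4 = 2 * log 2 := by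
    rw [show (4 : ℝ) = 2 ^ 2 by norm_num, log_pow]
    push_cast
    ring
  rw [hsum]
  rw [hlog4] at hlog3 hlog5 ⊢
  -- The bounds on `log 3`, `log 5` leave `2 log 2 - 2 (log 2)² + 1/4`,
  -- which is below `0.683` as `log 2 > 0.684`.
  nlinarith [log_two_gt_d9]

lemma logSumDefect_le {N : ℕ} (hN : 3 ≤ N) : logSumDefect N ≤ 0.683 := by
  rcases hN.eq_or_lt with rfl | hN
  · unfold logSumDefect
    rw [Icc_self, sum_singleton]
    norm_num
    nlinarith [sq_nonneg (log 3 - 1 / 2)]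
  · calc logSumDefect N ≤ logSumDefect N + logTail N :=
          le_add_of_nonneg_right (logTail_nonneg (by exact_mod_cast (by omega : 1 ≤ N)))
      _ ≤ logSumDefect 4 + logTail 4 :=
          antitoneOn_logSumDefect_add_logTail (by simp) (by simp; omega) hN
      _ ≤ 0.683 := logSumDefect_four_add_logTail_le

/-- For every real T ≥ 4 and integer N with 3 ≤ N ≤ ⌈T-1⌉,
∑_{k=3}^{N} (log k)/(k-1) ≤ (log T)^2/2 + 0.683. -/
theorem partial_sum_log_div_pred :
    ∀ (T : ℝ), 4 ≤ T → ∀ N : ℕ, 3 ≤ N → (N : ℤ) ≤ ⌈T - 1⌉ →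
      (∑ k ∈ Finset.Icc 3 N, Real.log (k : ℝ) / ((k : ℝ) - 1)) ≤
        (Real.log T) ^ 2 / 2 + 0.683 := by
  intro T _ N hN hNT
  have hN1 : (1 : ℝ) ≤ N := by exact_mod_cast (by omega : 1 ≤ N)
  have hNT : (N : ℝ) < T := by
    have := Int.le_ceil_iff.mp hNT
    push_cast at this
    linarith
  have hlog : log N ^ 2 ≤ log T ^ 2 :=
    pow_le_pow_left₀ (log_nonneg hN1) (log_le_log (by linarith) hNT.le) 2
  have := logSumDefect_le hN
  unfold logSumDefect at this
  linarith
end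

section
/- Let 0 < δ < 1, α ∈ {1−δ, 1}, and let h : [0,∞) → ℝ satisfy h(t) = 1 for 0 ≤ t ≤ α, h(t) = 0 for t ≥ α+δ, with h continuously differentiable on (α, α+δ) of the form h(t) = g((t−α)/δ) where g : [0,1] → [0,1] is C¹ with ∫₀¹ |g'(u)| du = 1. Then for every complex s with Re(s) ≤ 0 and s ≠ 0, the Mellin transform H(s) = ∫₀^∞ h(t) t^{s−1} dt satisfies |H(s)| ≤ (1−δ)^{Re(s)} / |s|. -/
open MeasureTheory Set

/-! On `[α, α + δ]` we have `t ≥ α ≥ 1 - δ` and `Re s ≤ 0`, so `|t^s| = t^{Re s} ≤ (1 - δ)^{Re s}`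
and the integral is at most `(1 - δ)^{Re s} ∫ |h'|`. The substitution `u = (t - α) / δ` gives
`∫ |h'| = ∫₀¹ |g'| = 1`; since this is nonzero, `|h'|` (and hence the measurable `h'`) is integrable. -/

theorem deriv_comp_sub_div (g : ℝ → ℝ) (α δ t : ℝ) :
    deriv (fun x => g ((x - α) / δ)) t = δ⁻¹ * deriv g ((t - α) / δ) := by
  simp only [div_eq_inv_mul]
  exact (deriv_comp_sub_const (fun y => g (δ⁻¹ * y)) α t).trans (deriv_comp_mul_left δ⁻¹ g (t - α))

theorem integral_abs_deriv_comp_sub_div (g : ℝ → ℝ) (α : ℝ) {δ : ℝ} (hδ : 0 < δ) :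
    ∫ t in α..α + δ, |deriv (fun x => g ((x - α) / δ)) t| = ∫ u in (0 : ℝ)..1, |deriv g u| := by
  simp only [deriv_comp_sub_div, abs_mul, abs_inv, abs_of_pos hδ]
  rw [intervalIntegral.integral_comp_sub_right (fun x => δ⁻¹ * |deriv g (x / δ)|),
    intervalIntegral.integral_comp_div (fun u => δ⁻¹ * |deriv g u|) hδ.ne',
    intervalIntegral.integral_const_mul, add_sub_cancel_left, sub_self, zero_div,
    div_self hδ.ne', smul_eq_mul, mul_inv_cancel_left₀ hδ.ne']

theorem setIntegral_abs_deriv_eq_of_eqOn_comp_sub_div {g h : ℝ → ℝ} {α δ : ℝ} (hδ : 0 < δ)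
    (hgh : EqOn h (fun t => g ((t - α) / δ)) (Icc α (α + δ))) :
    ∫ t in Icc α (α + δ), |deriv h t| = ∫ u in (0 : ℝ)..1, |deriv g u| := by
  have hderiv : EqOn (deriv h) (deriv fun t => g ((t - α) / δ)) (Ioo α (α + δ)) :=
    fun t ht => Filter.EventuallyEq.deriv_eq <|
      Filter.mem_of_superset (Ioo_mem_nhds ht.1 ht.2) fun x hx => hgh (Ioo_subset_Icc_self hx)
  rw [← integral_abs_deriv_comp_sub_div g α hδ, intervalIntegral.integral_of_le (by linarith),
    integral_Icc_eq_integral_Ioo, integral_Ioc_eq_integral_Ioo]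
  exact setIntegral_congr_fun measurableSet_Ioo fun t ht => by rw [hderiv ht]

theorem norm_setIntegral_mul_cpow_le {φ : ℝ → ℝ} {a b : ℝ} {s : ℂ} (ha : 0 < a) (hs : s.re ≤ 0)
    (hφ : IntegrableOn φ (Icc a b)) :
    ‖∫ t in Icc a b, (φ t : ℂ) * (t : ℂ) ^ s‖ ≤ a ^ s.re * ∫ t in Icc a b, |φ t| := by
  rw [← integral_const_mul]
  refine norm_integral_le_of_norm_le (hφ.abs.const_mul _) ?_
  filter_upwards [ae_restrict_mem measurableSet_Icc] with t ht
  have ht0 : 0 < t := ha.trans_le ht.1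
  rw [norm_mul, Complex.norm_real, Real.norm_eq_abs, Complex.norm_cpow_eq_rpow_re_of_pos ht0,
    mul_comm]
  exact mul_le_mul_of_nonneg_right (Real.rpow_le_rpow_of_nonpos ha ht.1 hs) (abs_nonneg _)

/-- Bound for the Mellin transform of the smoothing weight h in the half-plane Re(s) ≤ 0,
interpreted via the integration-by-parts identity H(s) = −(1/s)∫_α^{α+δ} h'(t) t^s dt. -/
theorem mellin_bound_re_nonpos :
    ∀ (δ α : ℝ) (g h : ℝ → ℝ), 0 < δ → δ < 1 → (α = 1 - δ ∨ α = 1) →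
      (∀ t : ℝ, 0 ≤ t → t ≤ α → h t = 1) →
      (∀ t : ℝ, α + δ ≤ t → h t = 0) →
      (∀ t : ℝ, α ≤ t → t ≤ α + δ → h t = g ((t - α) / δ)) →
      ContDiffOn ℝ 1 g (Set.Icc 0 1) →
      (∀ u : ℝ, 0 ≤ u → u ≤ 1 → 0 ≤ g u ∧ g u ≤ 1) →
      (∫ u in (0:ℝ)..1, |deriv g u|) = 1 →
      ∀ s : ℂ, s.re ≤ 0 → s ≠ 0 →
        ‖(-(1 / s) * ∫ t in Set.Icc α (α + δ),
            ((deriv h t : ℝ) : ℂ) * (t : ℂ) ^ s)‖ ≤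
          (1 - δ) ^ s.re / ‖s‖ := by
  intro δ α g h hδ hδ1 hα _ _ hgh _ _ hg' s hs hs0
  have hαδ : 1 - δ ≤ α := by rcases hα with rfl | rfl <;> linarith
  have hvar : ∫ t in Icc α (α + δ), |deriv h t| = 1 :=
    (setIntegral_abs_deriv_eq_of_eqOn_comp_sub_div hδ fun t ht => hgh t ht.1 ht.2).trans hg'
  have hint : IntegrableOn (deriv h) (Icc α (α + δ)) :=
    (integrable_norm_iff (measurable_deriv h).aestronglyMeasurable).1
      (Integrable.of_integral_ne_zero (by simp only [Real.norm_eq_abs, hvar]; exact one_ne_zero))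
  rw [norm_mul, norm_neg, one_div, norm_inv, inv_mul_eq_div]
  gcongr
  calc _ ≤ α ^ s.re * 1 := hvar ▸ norm_setIntegral_mul_cpow_le (by linarith) hs hint
    _ ≤ (1 - δ) ^ s.re := by
      rw [mul_one]
      exact Real.rpow_le_rpow_of_nonpos (by linarith) hαδ hs
end

section
/- Fix constants α₁ = 0.228, α₂ = 23.108, α₃ = 4.520. For real numbers u ≥ t > 0 and parameters n ≥ 2, Δ ≥ √3 define Q(u,t) = (n u/π)·log(Δu/(2πe)) − (n t/π)·log(Δt/(2πe)) + 2α₁ n log(Δ√(u t)) + 2α₂ n + 2α₃. If ω ≥ 1 and t ≥ 40 satisfy ω ≥ (π/t)·(2α₁ + (2α₂ + α₃)/log(√3·t)), then for all u ≥ t we have Q(u,t) < ω·(u n/π)·log(Δ u). -/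
open Real

set_option maxHeartbeats 1000000 in
/-- Lemma 6.3: with α₁ = 0.228, α₂ = 23.108, α₃ = 4.520, n ≥ 2, Δ ≥ √3, ω ≥ 1, t ≥ 40
satisfying ω ≥ (π/t)(2α₁ + (2α₂+α₃)/log(√3 t)), for all u ≥ t we have
Q(u,t) < ω·(un/π)·log(Δu). -/
theorem Q_lt_omega_bound :
    ∀ (n Δ ω t u : ℝ), 2 ≤ n → Real.sqrt 3 ≤ Δ → 1 ≤ ω → 40 ≤ t →
      (π / t) * (2 * 0.228 + (2 * 23.108 + 4.520) / Real.log (Real.sqrt 3 * t)) ≤ ω →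
      t ≤ u →
      (n * u / π) * Real.log (Δ * u / (2 * π * Real.exp 1)) -
          (n * t / π) * Real.log (Δ * t / (2 * π * Real.exp 1)) +
          2 * 0.228 * n * Real.log (Δ * Real.sqrt (u * t)) +
          2 * 23.108 * n + 2 * 4.520 <
        ω * (u * n / π) * Real.log (Δ * u) := by
  intro n Δ ω t u hn hΔ hω ht hωb hu
  have hπ : (0:ℝ) < π := Real.pi_pos
  have hπ315 : π < 3.15 := Real.pi_lt_d2
  have hπ314 : (3.14:ℝ) < π := by linarith [Real.pi_gt_d6]
  have ht0 : (0:ℝ) < t := by linarith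
  have hu0 : (0:ℝ) < u := by linarith
  have h3 : (1.7:ℝ) ≤ Real.sqrt 3 := by
    rw [show (1.7:ℝ) = Real.sqrt (1.7^2) from (Real.sqrt_sq (by norm_num)).symm]
    exact Real.sqrt_le_sqrt (by norm_num)
  have hΔ1 : (1.7:ℝ) ≤ Δ := le_trans h3 hΔ
  have hΔ0 : (0:ℝ) < Δ := by linarith
  have e0 : (0:ℝ) < Real.exp 1 := Real.exp_pos 1
  -- log expansions
  have h1 : Real.log (Δ * u / (2 * π * Real.exp 1)) = (Real.log Δ) + (Real.log u) - (Real.log 2 + Real.log π + 1) := by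
    rw [Real.log_div (by positivity) (by positivity), Real.log_mul hΔ0.ne' hu0.ne',
      Real.log_mul (by positivity) e0.ne', Real.log_mul (by norm_num) hπ.ne', Real.log_exp]
  have h2 : Real.log (Δ * t / (2 * π * Real.exp 1)) = (Real.log Δ) + (Real.log t) - (Real.log 2 + Real.log π + 1) := by
    rw [Real.log_div (by positivity) (by positivity), Real.log_mul hΔ0.ne' ht0.ne',
      Real.log_mul (by positivity) e0.ne', Real.log_mul (by norm_num) hπ.ne', Real.log_exp]
  have h4 : Real.log (Δ * Real.sqrt (u * t)) = (Real.log Δ) + ((Real.log u) + (Real.log t)) / 2 := by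
    rw [Real.log_mul hΔ0.ne' (by positivity), Real.log_sqrt (by positivity),
      Real.log_mul hu0.ne' ht0.ne']
  have h5 : Real.log (Δ * u) = (Real.log Δ) + (Real.log u) := Real.log_mul hΔ0.ne' hu0.ne'
  -- numeric bounds
  have hlog2 : (0.693:ℝ) < Real.log 2 := by linarith [Real.log_two_gt_d9]
  have hc1 : (1:ℝ) ≤ (Real.log 2 + Real.log π + 1) := by
    have : (0:ℝ) < Real.log π := Real.log_pos (by linarith)
    linarith
  have hat : (4.158:ℝ) ≤ (Real.log Δ) + (Real.log t) := by
    have h64 : Real.log 64 ≤ Real.log (Δ * t) :=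
      Real.log_le_log (by norm_num) (by nlinarith)
    rw [Real.log_mul hΔ0.ne' ht0.ne'] at h64
    have : Real.log 64 = 6 * Real.log 2 := by
      rw [show (64:ℝ) = 2 ^ 6 by norm_num, Real.log_pow]; push_cast; ring
    linarith
  have hlult : (Real.log t) ≤ (Real.log u) := Real.log_le_log ht0 hu
  have hltu : t * ((Real.log u) - (Real.log t)) ≤ u - t := by
    have h := Real.log_le_sub_one_of_pos (show (0:ℝ) < u / t by positivity)
    rw [Real.log_div hu0.ne' ht0.ne'] at h
    have h2' : t * (u / t - 1) = u - t := by field_simp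
    nlinarith
  have hlin : 40 * ((Real.log u) - (Real.log t)) ≤ u - t := by nlinarith
  -- reduce using ω ≥ 1
  have hX0 : (0:ℝ) ≤ u * n / π * ((Real.log Δ) + (Real.log u)) := by
    apply mul_nonneg (by positivity); linarith
  have homega : u * n / π * ((Real.log Δ) + (Real.log u)) ≤ ω * (u * n / π * ((Real.log Δ) + (Real.log u))) :=
    le_mul_of_one_le_left hX0 hω
  rw [h1, h2, h4, h5]
  have key : n * u * ((Real.log Δ) + (Real.log u) - (Real.log 2 + Real.log π + 1)) - n * t * ((Real.log Δ) + (Real.log t) - (Real.log 2 + Real.log π + 1)) +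
      (2 * 0.228 * n * ((Real.log Δ) + ((Real.log u) + (Real.log t)) / 2) + 2 * 23.108 * n + 2 * 4.520) * π
      < u * n * ((Real.log Δ) + (Real.log u)) := by
    have hn0 : (0:ℝ) ≤ n := by linarith
    have hta : (38.56:ℝ) ≤ t - 0.456 * π := by linarith
    have S3 : (38.56:ℝ) * 4.158 ≤ (t - 0.456 * π) * ((Real.log Δ) + (Real.log t)) :=
      mul_le_mul hta hat (by norm_num) (by linarith)
    have S3n := mul_le_mul_of_nonneg_left S3 hn0
    have hnd : (0:ℝ) ≤ n * ((Real.log u) - (Real.log t)) := mul_nonneg hn0 (by linarith)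
    have A := mul_le_mul_of_nonneg_right
      (show (0.228:ℝ) * π ≤ 0.7182 by linarith) hnd
    have B := mul_le_mul_of_nonneg_left hlin (show (0:ℝ) ≤ 0.018 * n by linarith)
    have hprod : (0:ℝ) ≤ n * (u - t) := mul_nonneg hn0 (by linarith)
    have S2 : n * (u - t) ≤ n * (u - t) * (Real.log 2 + Real.log π + 1) := le_mul_of_one_le_right hprod hc1
    have hπn : (0:ℝ) ≤ (3.15 - π) * n := mul_nonneg (by linarith) hn0
    have S4 : 46.216 * π * n + 9.04 * π ≤ 159.9 * n := by nlinarith [hπn, hn, hπ315]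
    linarith [S3n, A, B, S2, S4, hprod, hn]
  have eqL : n * u / π * ((Real.log Δ) + (Real.log u) - (Real.log 2 + Real.log π + 1)) - n * t / π * ((Real.log Δ) + (Real.log t) - (Real.log 2 + Real.log π + 1)) +
      2 * 0.228 * n * ((Real.log Δ) + ((Real.log u) + (Real.log t)) / 2) + 2 * 23.108 * n + 2 * 4.520 =
      (n * u * ((Real.log Δ) + (Real.log u) - (Real.log 2 + Real.log π + 1)) - n * t * ((Real.log Δ) + (Real.log t) - (Real.log 2 + Real.log π + 1)) +
        (2 * 0.228 * n * ((Real.log Δ) + ((Real.log u) + (Real.log t)) / 2) + 2 * 23.108 * n + 2 * 4.520) * π) / π := by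
    field_simp
    ring
  have eqR : u * n / π * ((Real.log Δ) + (Real.log u)) = (u * n * ((Real.log Δ) + (Real.log u))) / π := by ring
  calc n * u / π * ((Real.log Δ) + (Real.log u) - (Real.log 2 + Real.log π + 1)) - n * t / π * ((Real.log Δ) + (Real.log t) - (Real.log 2 + Real.log π + 1)) +
      2 * 0.228 * n * ((Real.log Δ) + ((Real.log u) + (Real.log t)) / 2) + 2 * 23.108 * n + 2 * 4.520
      < u * n / π * ((Real.log Δ) + (Real.log u)) := by
        rw [eqL, eqR]
        exact (div_lt_div_iff_of_pos_right hπ).mpr key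
    _ ≤ ω * (u * n / π) * ((Real.log Δ) + (Real.log u)) := by rw [mul_assoc]; exact homega
end

section
/- Let z > 0 and 0 ≤ y ≤ 1 and define K₂(z,y) = (1/2)·∫_y^∞ v·exp(−(z/2)(v + 1/v)) dv. Then K₂(z,y) ≤ √(π/2) · e^{−z}/√z · (1 + 15/(8z) + 105/(128 z²)) holds for all z ≥ 1. -/
/-!
The substitution `v = exp (2 arsinh s) = (s + √(1 + s²))²` maps `ℝ` onto `(0, ∞)` and turns
`v + 1 / v` into `2 + 4 s²`, so that
`∫_0^∞ v e^{-(z/2)(v + 1/v)} dv = 2 e^{-z} ∫_ℝ e^{4 arsinh s} / √(1 + s²) · e^{-2 z s²} ds`.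
The factor `e^{4 arsinh s} / √(1 + s²)` is at most `1 + 4s + 15/2 s² + 8s³ + 35/8 s⁴`: its odd part
is exactly `4s + 8s³`, and the even part is bounded by its Taylor polynomial of degree four.
Integrating this quartic against the Gaussian, the odd moments vanish and the even ones give
`√(π / (2z)) (1 + 15/(8z) + 105/(128z²))`. Cutting off `(0, y)` only decreases the integral.
-/

open Real Set MeasureTheory Filter

section GaussianMoments

variable {b : ℝ}

theorem integrable_pow_mul_exp_neg_mul_sq (hb : 0 < b) (n : ℕ) :
    Integrable fun x : ℝ => x ^ n * exp (-b * x ^ 2) := by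
  simpa only [rpow_natCast] using
    integrable_rpow_mul_exp_neg_mul_sq hb (s := n) (by linarith [n.cast_nonneg (α := ℝ)])

theorem integral_pow_mul_exp_neg_mul_sq_of_odd {n : ℕ} (hn : Odd n) :
    ∫ x : ℝ, x ^ n * exp (-b * x ^ 2) = 0 := by
  have h := integral_neg_eq_self (fun x : ℝ => x ^ n * exp (-b * x ^ 2)) volume
  simp only [hn.neg_pow, neg_sq, neg_mul, integral_neg] at h ⊢
  linarith

theorem integral_pow_add_two_mul_exp_neg_mul_sq (hb : 0 < b) (n : ℕ) :
    ∫ x : ℝ, x ^ (n + 2) * exp (-b * x ^ 2) =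
      (n + 1) / (2 * b) * ∫ x : ℝ, x ^ n * exp (-b * x ^ 2) := by
  have hderiv (x : ℝ) : HasDerivAt (fun x => x ^ (n + 1) * exp (-b * x ^ 2))
      ((n + 1) * (x ^ n * exp (-b * x ^ 2)) - 2 * b * (x ^ (n + 2) * exp (-b * x ^ 2))) x := by
    have : HasDerivAt (fun x => x ^ (n + 1) * exp (-b * x ^ 2)) _ x :=
      (hasDerivAt_pow (n + 1) x).mul (((hasDerivAt_pow 2 x).const_mul (-b)).exp)
    convert this using 1
    push_cast
    ring
  have hn := integrable_pow_mul_exp_neg_mul_sq hb n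
  have hn2 := integrable_pow_mul_exp_neg_mul_sq hb (n + 2)
  have h := integral_eq_zero_of_hasDerivAt_of_integrable hderiv
    ((hn.const_mul _).sub (hn2.const_mul _)) (integrable_pow_mul_exp_neg_mul_sq hb (n + 1))
  rw [integral_sub (hn.const_mul _) (hn2.const_mul _), integral_const_mul,
    integral_const_mul] at h
  rw [div_mul_eq_mul_div, eq_div_iff (by positivity)]
  linarith

theorem integral_sq_mul_exp_neg_mul_sq (hb : 0 < b) :
    ∫ x : ℝ, x ^ 2 * exp (-b * x ^ 2) = √(π / b) / (2 * b) := by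
  rw [integral_pow_add_two_mul_exp_neg_mul_sq hb 0]
  simp only [pow_zero, one_mul, integral_gaussian]
  push_cast
  ring

theorem integral_pow_four_mul_exp_neg_mul_sq (hb : 0 < b) :
    ∫ x : ℝ, x ^ 4 * exp (-b * x ^ 2) = 3 * √(π / b) / (4 * b ^ 2) := by
  rw [integral_pow_add_two_mul_exp_neg_mul_sq hb 2, integral_sq_mul_exp_neg_mul_sq hb]
  field_simp
  norm_num

theorem integrable_quartic_mul_exp_neg_mul_sq (hb : 0 < b) (a₀ a₁ a₂ a₃ a₄ : ℝ) :
    Integrable fun x : ℝ =>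
      (a₀ + a₁ * x + a₂ * x ^ 2 + a₃ * x ^ 3 + a₄ * x ^ 4) * exp (-b * x ^ 2) := by
  have := integrable_exp_neg_mul_sq hb
  have := integrable_mul_exp_neg_mul_sq hb
  have := integrable_pow_mul_exp_neg_mul_sq hb 2
  have := integrable_pow_mul_exp_neg_mul_sq hb 3
  have := integrable_pow_mul_exp_neg_mul_sq hb 4
  simp only [add_mul, mul_assoc]
  fun_prop

theorem integral_quartic_mul_exp_neg_mul_sq (hb : 0 < b) (a₀ a₁ a₂ a₃ a₄ : ℝ) :
    ∫ x : ℝ, (a₀ + a₁ * x + a₂ * x ^ 2 + a₃ * x ^ 3 + a₄ * x ^ 4) * exp (-b * x ^ 2) =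
      √(π / b) * (a₀ + a₂ / (2 * b) + 3 * a₄ / (4 * b ^ 2)) := by
  have := integrable_exp_neg_mul_sq hb
  have := integrable_mul_exp_neg_mul_sq hb
  have := integrable_pow_mul_exp_neg_mul_sq hb 2
  have := integrable_pow_mul_exp_neg_mul_sq hb 3
  have := integrable_pow_mul_exp_neg_mul_sq hb 4
  simp only [add_mul, mul_assoc]
  rw [integral_add (by fun_prop) (by fun_prop), integral_add (by fun_prop) (by fun_prop),
    integral_add (by fun_prop) (by fun_prop), integral_add (by fun_prop) (by fun_prop)]
  have h1 := integral_pow_mul_exp_neg_mul_sq_of_odd (b := b) odd_one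
  have h3 := integral_pow_mul_exp_neg_mul_sq_of_odd (b := b) (by decide : Odd 3)
  simp only [pow_one] at h1
  simp only [integral_const_mul, integral_gaussian, h1, h3, integral_sq_mul_exp_neg_mul_sq hb,
    integral_pow_four_mul_exp_neg_mul_sq hb]
  field_simp
  ring

end GaussianMoments

section Substitution

theorem exp_two_mul_arsinh_add_inv (s : ℝ) :
    exp (2 * arsinh s) + 1 / exp (2 * arsinh s) = 2 + 4 * s ^ 2 := by
  rw [one_div, ← exp_neg, ← add_halves (exp _ + _), ← cosh_eq, cosh_two_mul, cosh_sq,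
    sinh_arsinh]
  ring

theorem hasDerivAt_exp_two_mul_arsinh (s : ℝ) :
    HasDerivAt (fun s => exp (2 * arsinh s)) (2 * exp (2 * arsinh s) / √(1 + s ^ 2)) s := by
  convert ((hasDerivAt_arsinh s).const_mul 2).exp using 1
  ring

theorem strictMono_exp_two_mul_arsinh : StrictMono fun s => exp (2 * arsinh s) :=
  exp_strictMono.comp ((strictMono_mul_left_of_pos two_pos).comp arsinh_strictMono)

theorem image_univ_exp_two_mul_arsinh : (fun s => exp (2 * arsinh s)) '' univ = Ioi 0 := by
  rw [image_univ, ← range_exp]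
  exact ((mul_left_surjective₀ two_ne_zero).comp arsinh_surjective).range_comp exp

theorem exp_four_mul_arsinh_le (s : ℝ) :
    exp (4 * arsinh s) ≤
      √(1 + s ^ 2) * (1 + 4 * s + 15 / 2 * s ^ 2 + 8 * s ^ 3 + 35 / 8 * s ^ 4) := by
  set c := √(1 + s ^ 2)
  have hc2 : c ^ 2 = 1 + s ^ 2 := sq_sqrt (by positivity)
  -- Squared, the difference of the two sides is `21/8 s⁶ + 1329/64 s⁸ + 1225/64 s¹⁰`.
  have heven : 1 + 8 * s ^ 2 + 8 * s ^ 4 ≤ c * (1 + 15 / 2 * s ^ 2 + 35 / 8 * s ^ 4) := by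
    refine le_of_pow_le_pow_left₀ two_ne_zero (by positivity) ?_
    rw [mul_pow, hc2]
    nlinarith [pow_nonneg (sq_nonneg s) 3, pow_nonneg (sq_nonneg s) 4, pow_nonneg (sq_nonneg s) 5]
  calc exp (4 * arsinh s) = (s + c) ^ 4 := by rw [← exp_arsinh, ← exp_nat_mul]; norm_num
    _ = 1 + 8 * s ^ 2 + 8 * s ^ 4 + c * (4 * s + 8 * s ^ 3) := by
      linear_combination (c ^ 2 + 1 + 7 * s ^ 2 + 4 * s * c) * hc2
    _ ≤ _ := by linarith

theorem abs_deriv_smul_comp_exp_two_mul_arsinh_le (z s : ℝ) :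
    |2 * exp (2 * arsinh s) / √(1 + s ^ 2)| •
        (exp (2 * arsinh s) * exp (-(z / 2) * (exp (2 * arsinh s) + 1 / exp (2 * arsinh s)))) ≤
      2 * exp (-z) *
        ((1 + 4 * s + 15 / 2 * s ^ 2 + 8 * s ^ 3 + 35 / 8 * s ^ 4) * exp (-(2 * z) * s ^ 2)) := by
  have hc : 0 < √(1 + s ^ 2) := sqrt_pos.2 (by positivity)
  have hquot : exp (4 * arsinh s) / √(1 + s ^ 2) ≤
      1 + 4 * s + 15 / 2 * s ^ 2 + 8 * s ^ 3 + 35 / 8 * s ^ 4 :=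
    (div_le_iff₀' hc).2 (exp_four_mul_arsinh_le s)
  rw [exp_two_mul_arsinh_add_inv, abs_of_pos (by positivity), smul_eq_mul]
  calc 2 * exp (2 * arsinh s) / √(1 + s ^ 2) *
        (exp (2 * arsinh s) * exp (-(z / 2) * (2 + 4 * s ^ 2)))
      = 2 * exp (-z) * (exp (4 * arsinh s) / √(1 + s ^ 2) * exp (-(2 * z) * s ^ 2)) := by
        rw [show 4 * arsinh s = 2 * arsinh s + 2 * arsinh s by ring, exp_add,
          show -(z / 2) * (2 + 4 * s ^ 2) = -z + -(2 * z) * s ^ 2 by ring, exp_add]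
        ring
    _ ≤ _ := by gcongr

variable {z : ℝ}

theorem integrableOn_Ioi_mul_exp_neg_mul_add_inv (hz : 0 < z) :
    IntegrableOn (fun v => v * exp (-(z / 2) * (v + 1 / v))) (Ioi 0) := by
  rw [← image_univ_exp_two_mul_arsinh, integrableOn_image_iff_integrableOn_abs_deriv_smul
    MeasurableSet.univ (fun s _ => (hasDerivAt_exp_two_mul_arsinh s).hasDerivWithinAt)
    strictMono_exp_two_mul_arsinh.injective.injOn, integrableOn_univ]
  have hmeas : Measurable arsinh := continuous_arsinh.measurable
  have hmajorant := (integrable_quartic_mul_exp_neg_mul_sq (b := 2 * z) (by positivity)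
    1 4 (15 / 2) 8 (35 / 8)).const_mul (2 * exp (-z))
  refine hmajorant.mono' (by fun_prop : Measurable _).aestronglyMeasurable
    (ae_of_all _ fun s => ?_)
  rw [norm_of_nonneg (by positivity)]
  exact abs_deriv_smul_comp_exp_two_mul_arsinh_le z s

theorem integral_Ioi_mul_exp_neg_mul_add_inv_le (hz : 0 < z) :
    ∫ v in Ioi 0, v * exp (-(z / 2) * (v + 1 / v)) ≤
      2 * exp (-z) * (√(π / (2 * z)) * (1 + 15 / (8 * z) + 105 / (128 * z ^ 2))) := by
  have hb : 0 < 2 * z := by positivity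
  rw [← image_univ_exp_two_mul_arsinh, integral_image_eq_integral_abs_deriv_smul
    MeasurableSet.univ (fun s _ => (hasDerivAt_exp_two_mul_arsinh s).hasDerivWithinAt)
    strictMono_exp_two_mul_arsinh.injective.injOn, setIntegral_univ]
  calc _ ≤ ∫ s, 2 * exp (-z) *
        ((1 + 4 * s + 15 / 2 * s ^ 2 + 8 * s ^ 3 + 35 / 8 * s ^ 4) * exp (-(2 * z) * s ^ 2)) :=
        integral_mono_of_nonneg (ae_of_all _ fun s => by positivity)
          ((integrable_quartic_mul_exp_neg_mul_sq hb _ _ _ _ _).const_mul _)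
          (ae_of_all _ fun s => abs_deriv_smul_comp_exp_two_mul_arsinh_le z s)
    _ = _ := by
      rw [integral_const_mul, integral_quartic_mul_exp_neg_mul_sq hb]
      field_simp
      ring

end Substitution

/-- Rosser–Schoenfeld bound: for z ≥ 1 and 0 ≤ y ≤ 1,
K₂(z,y) = (1/2)∫_y^∞ v·exp(−(z/2)(v+1/v)) dv ≤ √(π/2)·e^{−z}/√z·(1 + 15/(8z) + 105/(128z²)). -/
theorem K2_bound :
    ∀ (z y : ℝ), 1 ≤ z → 0 ≤ y → y ≤ 1 →
      (1 / 2) * (∫ v in Set.Ioi y, v * Real.exp (-(z / 2) * (v + 1 / v))) ≤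
        Real.sqrt (Real.pi / 2) * Real.exp (-z) / Real.sqrt z *
          (1 + 15 / (8 * z) + 105 / (128 * z ^ 2)) := by
  intro z y hz hy _
  have hz0 : 0 < z := by linarith
  have htail : ∫ v in Ioi y, v * exp (-(z / 2) * (v + 1 / v)) ≤
      ∫ v in Ioi 0, v * exp (-(z / 2) * (v + 1 / v)) :=
    setIntegral_mono_set (integrableOn_Ioi_mul_exp_neg_mul_add_inv hz0)
      (ae_restrict_of_forall_mem measurableSet_Ioi fun v (hv : 0 < v) => by positivity)
      (Ioi_subset_Ioi hy).eventuallyLE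
  calc (1 / 2) * ∫ v in Ioi y, v * exp (-(z / 2) * (v + 1 / v))
      ≤ (1 / 2) *
          (2 * exp (-z) * (√(π / (2 * z)) * (1 + 15 / (8 * z) + 105 / (128 * z ^ 2)))) := by
        gcongr
        exact htail.trans (integral_Ioi_mul_exp_neg_mul_add_inv_le hz0)
    _ = √(π / 2) * exp (-z) / √z * (1 + 15 / (8 * z) + 105 / (128 * z ^ 2)) := by
        rw [div_mul_eq_div_div, sqrt_div' _ hz0.le]
        ring
end

section
/- Let 0 < ε ≤ 1 and let ρ range over a multiset Z of complex numbers with 0 < Re(ρ) < 1 for each ρ ∈ Z, and suppose ∑_{ρ∈Z} Re(1/(1+ε+iT−ρ)) ≤ B for some real T and B ≥ 0. Then the number of ρ ∈ Z with |Im(ρ) − T| ≤ a (for any a > 0) is at most ((1+ε)² + a²)/ε · B. -/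
open scoped Classical

/-- Zero-counting bound: if each ρ ∈ Z has 0 < Re ρ < 1 and
∑_{ρ∈Z} Re(1/(1+ε+iT−ρ)) ≤ B, then the number of ρ ∈ Z with |Im ρ − T| ≤ a is at most
((1+ε)² + a²)/ε · B. -/
theorem zero_count_bound :
    ∀ (ε a T B : ℝ) (Z : Multiset ℂ), 0 < ε → ε ≤ 1 → 0 < a → 0 ≤ B →
      (∀ ρ ∈ Z, 0 < ρ.re ∧ ρ.re < 1) →
      (Z.map (fun ρ => (1 / (1 + ε + Complex.I * T - ρ)).re)).sum ≤ B →
      ((Z.filter (fun ρ => |ρ.im - T| ≤ a)).card : ℝ) ≤ ((1 + ε) ^ 2 + a ^ 2) / ε * B := by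
  intro ε a T B Z hε hε1 ha hB hZ hsum
  set f : ℂ → ℝ := fun ρ => (1 / (1 + ε + Complex.I * T - ρ)).re with hf
  set C : ℝ := (1 + ε) ^ 2 + a ^ 2 with hC
  have hCpos : 0 < C := by positivity
  have hre : ∀ ρ : ℂ, f ρ = (1 + ε - ρ.re) / ((1 + ε - ρ.re) ^ 2 + (T - ρ.im) ^ 2) := by
    intro ρ
    rw [hf]
    simp only [one_div, Complex.inv_re, Complex.normSq_apply, Complex.sub_re,
      Complex.add_re, Complex.sub_im, Complex.add_im, Complex.mul_re, Complex.mul_im,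
      Complex.I_re, Complex.I_im, Complex.ofReal_re, Complex.ofReal_im, Complex.one_re,
      Complex.one_im]
    ring_nf
  have hnonneg : ∀ ρ ∈ Z, 0 ≤ f ρ := by
    intro ρ hρ
    rw [hre]
    have h := hZ ρ hρ
    have : 0 < 1 + ε - ρ.re := by linarith [h.2]
    positivity
  have hlow : ∀ ρ ∈ Z, |ρ.im - T| ≤ a → ε / C ≤ f ρ := by
    intro ρ hρ hab
    rw [hre]
    obtain ⟨h0, h1⟩ := hZ ρ hρ
    have hu : ε < 1 + ε - ρ.re := by linarith
    have hu' : 1 + ε - ρ.re < 1 + ε := by linarith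
    have hv : (T - ρ.im) ^ 2 ≤ a ^ 2 := by
      rw [abs_le] at hab
      nlinarith [hab.1, hab.2]
    have hupos : 0 < 1 + ε - ρ.re := lt_trans hε hu
    have hden : 0 < (1 + ε - ρ.re) ^ 2 + (T - ρ.im) ^ 2 := by positivity
    rw [div_le_div_iff₀ hCpos hden]
    have h2 : (1 + ε - ρ.re) ^ 2 + (T - ρ.im) ^ 2 ≤ C := by
      rw [hC]; nlinarith [hupos, hu'.le, hv]
    have h3 : ε * ((1 + ε - ρ.re) ^ 2 + (T - ρ.im) ^ 2) ≤ ε * C :=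
      mul_le_mul_of_nonneg_left h2 hε.le
    have h4 : ε * C ≤ (1 + ε - ρ.re) * C := mul_le_mul_of_nonneg_right hu.le hCpos.le
    linarith
  -- split the sum
  have hsplit : Z.filter (fun ρ => |ρ.im - T| ≤ a) + Z.filter (fun ρ => ¬ |ρ.im - T| ≤ a) = Z :=
    Multiset.filter_add_not _ Z
  have hsum2 : ((Z.filter (fun ρ => |ρ.im - T| ≤ a)).map f).sum ≤ B := by
    have hrest : 0 ≤ ((Z.filter (fun ρ => ¬ |ρ.im - T| ≤ a)).map f).sum := by
      apply Multiset.sum_nonneg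
      intro x hx
      rw [Multiset.mem_map] at hx
      obtain ⟨ρ, hρ, rfl⟩ := hx
      exact hnonneg ρ (Multiset.mem_of_mem_filter hρ)
    have : (Z.map f).sum = ((Z.filter (fun ρ => |ρ.im - T| ≤ a)).map f).sum
        + ((Z.filter (fun ρ => ¬ |ρ.im - T| ≤ a)).map f).sum := by
      rw [← Multiset.sum_add, ← Multiset.map_add, hsplit]
    rw [this] at hsum
    linarith
  have hcard : ((Z.filter (fun ρ => |ρ.im - T| ≤ a)).card : ℝ) * (ε / C)
      ≤ ((Z.filter (fun ρ => |ρ.im - T| ≤ a)).map f).sum := by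
    have := Multiset.card_nsmul_le_sum (s := (Z.filter (fun ρ => |ρ.im - T| ≤ a)).map f)
      (a := ε / C) ?_
    · simpa [Multiset.card_map, nsmul_eq_mul] using this
    · intro x hx
      rw [Multiset.mem_map] at hx
      obtain ⟨ρ, hρ, rfl⟩ := hx
      rw [Multiset.mem_filter] at hρ
      exact hlow ρ hρ.1 hρ.2
  have key : ((Z.filter (fun ρ => |ρ.im - T| ≤ a)).card : ℝ) * (ε / C) ≤ B := le_trans hcard hsum2
  rw [mul_div_assoc'] at key
  rw [div_le_iff₀ hCpos] at key
  rw [div_mul_eq_mul_div, le_div_iff₀ hε]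
  nlinarith [key]
end
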